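/- arXiv:1810.01368 — 4 statements merged into one kernel-verified Lean document; each statement's English description precedes it below -/
import Mathlib

section
/- Let n, m ≥ 1, let F : ℝⁿ × ℝᵐ × [0,∞) → ℝⁿ be continuous, let Q : ℝⁿ × [0,∞) → ℝ be locally Lipschitz, nonnegative and Hadamard directionally differentiable at every point, let γ > 0, g : ℝⁿ × [0,∞) → ℝᵐ and ψ : ℝⁿ × ℝᵐ × [0,∞) → ℝᵐ. Assume that for every x ∈ ℝⁿ and t ≥ 0 with Q(x,t) > 0 and every u ∈ ℝᵐ one has Q'((x,t); (F(x,u,t), 1)) ≤ g(x,t)ᵀu and g(x,t)ᵀψ(x,u,t) ≤ 0. Let x : [0,∞) → ℝⁿ be locally Lipschitz and u : [0,∞) → ℝᵐ satisfy u(t) = γψ(x(t), u(t), t) for all t ≥ 0 and ẋ(t) = F(x(t), u(t), t) for almost every t ≥ 0. If Q(x(T), T) = 0 for some T ≥ 0, then Q(x(t), t) = 0 for all t ≥ T. -/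
/-!
Along the trajectory, `V t = Q (x t, t)` is locally Lipschitz, hence absolutely continuous on
compact intervals, and by the chain rule for Hadamard derivatives its right derivative at almost
every `t` is `Q'((x t, t); (F, 1)) ≤ ⟪g, u⟫ = γ ⟪g, ψ⟫ ≤ 0` wherever `V t > 0`. If `V` were
positive at some `t₁ ≥ T`, integrating `V'` from the last zero of `V` before `t₁` would give
`V t₁ ≤ 0`.
-/

open Filter Topology MeasureTheory RealInnerProductSpace

/-- The Hadamard directional derivative: `d` is the Hadamard directional derivative of `f`
at `x` in direction `h` if `(f (x + α h') - f x) / α → d` as `(α, h') → (0⁺, h)`. -/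
def HasHadamardDerivAt {E : Type*} [NormedAddCommGroup E] [NormedSpace ℝ E]
    (f : E → ℝ) (x h : E) (d : ℝ) : Prop :=
  Filter.Tendsto (fun p : ℝ × E => (f (x + p.1 • p.2) - f x) / p.1)
    ((𝓝[>] (0 : ℝ)) ×ˢ 𝓝 h) (𝓝 d)

open Set

theorem HasHadamardDerivAt.comp_hasDerivWithinAt_Ioi {E : Type*} [NormedAddCommGroup E]
    [NormedSpace ℝ E] {f : E → ℝ} {c : ℝ → E} {t : ℝ} {v : E} {d : ℝ}
    (hf : HasHadamardDerivAt f (c t) v d) (hc : HasDerivWithinAt c v (Ioi t) t) :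
    HasDerivWithinAt (f ∘ c) d (Ioi t) t := by
  rw [hasDerivWithinAt_iff_tendsto_slope' self_notMem_Ioi] at hc ⊢
  have hstep : Tendsto (fun s => s - t) (𝓝[>] t) (𝓝[>] 0) :=
    tendsto_nhdsWithin_of_tendsto_nhds_of_eventually_within _
      ((continuous_sub_right t).tendsto' t 0 (sub_self t) |>.mono_left nhdsWithin_le_nhds)
      (eventually_nhdsWithin_of_forall fun s hs => sub_pos.2 (mem_Ioi.1 hs))
  refine (hf.comp (hstep.prodMk hc)).congr' ?_
  filter_upwards [self_mem_nhdsWithin] with s hs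
  have hst : s - t ≠ 0 := sub_ne_zero.2 (ne_of_gt hs)
  simp only [Function.comp, slope_def_module, smul_inv_smul₀ hst, add_sub_cancel, smul_eq_mul]
  rw [div_eq_inv_mul]

theorem AbsolutelyContinuousOnInterval.le_of_ae_deriv_right_nonpos {V : ℝ → ℝ} {a b : ℝ}
    (hV : AbsolutelyContinuousOnInterval V a b) (hab : a ≤ b)
    (hderiv : ∀ᵐ t, t ∈ Ioo a b → ∃ d ≤ 0, HasDerivWithinAt V d (Ioi t) t) :
    V b ≤ V a := by
  have hnonpos : ∀ᵐ t, t ∈ Ioo a b → deriv V t ≤ 0 := by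
    filter_upwards [hV.ae_differentiableAt, hderiv] with t hdiff hright ht
    obtain ⟨d, hd, hVd⟩ := hright ht
    have hIcc : t ∈ uIcc a b := by rw [uIcc_of_le hab]; exact Ioo_subset_Icc_self ht
    rwa [(uniqueDiffWithinAt_Ioi t).eq_deriv _ (hdiff hIcc).hasDerivAt.hasDerivWithinAt hVd]
  have hint : ∫ t in a..b, deriv V t ≤ 0 := by
    rw [intervalIntegral.integral_of_le hab, ← Measure.restrict_congr_set Ioo_ae_eq_Ioc]
    exact integral_nonpos_of_ae ((ae_restrict_iff' measurableSet_Ioo).2 hnonpos)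
  linarith [hV.integral_deriv_eq_sub]

theorem LocallyLipschitz.nonpos_of_ae_deriv_right_nonpos_of_pos {V : ℝ → ℝ}
    (hV : LocallyLipschitz V) {T : ℝ} (hT : V T ≤ 0)
    (hderiv : ∀ᵐ t, T < t → 0 < V t → ∃ d ≤ 0, HasDerivWithinAt V d (Ioi t) t) :
    ∀ t, T ≤ t → V t ≤ 0 := by
  intro t₁ ht₁
  by_contra! hpos
  set Z := Icc T t₁ ∩ {r | V r ≤ 0}
  have hZclosed : IsClosed Z := isClosed_Icc.inter (isClosed_le hV.continuous continuous_const)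
  have hZbdd : BddAbove Z := ⟨t₁, fun r hr => hr.1.2⟩
  have hsZ : sSup Z ∈ Z := hZclosed.csSup_mem ⟨T, ⟨le_rfl, ht₁⟩, hT⟩ hZbdd
  set s := sSup Z
  have hpos_after : ∀ r ∈ Ioc s t₁, 0 < V r := fun r hr => not_le.1 fun hVr =>
    (le_csSup hZbdd ⟨⟨hsZ.1.1.trans hr.1.le, hr.2⟩, hVr⟩).not_gt hr.1
  obtain ⟨K, hK⟩ := hV.locallyLipschitzOn.exists_lipschitzOnWith_of_compact
    isCompact_uIcc
  have hdec : V t₁ ≤ V s := hK.absolutelyContinuousOnInterval.le_of_ae_deriv_right_nonpos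
    hsZ.1.2 <| by
      filter_upwards [hderiv] with r hr hmem
      exact hr (hsZ.1.1.trans_lt hmem.1) (hpos_after r (Ioo_subset_Ioc_self hmem))
  linarith [show V s ≤ 0 from hsZ.2]

theorem speed_gradient_goal_stays_zero_general
    (n m : ℕ)
    (F : EuclideanSpace ℝ (Fin n) → EuclideanSpace ℝ (Fin m) → ℝ → EuclideanSpace ℝ (Fin n))
    (Q : EuclideanSpace ℝ (Fin n) × ℝ → ℝ)
    (hQlip : LocallyLipschitz Q)
    (hQnonneg : ∀ x t, 0 ≤ t → 0 ≤ Q (x, t))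
    (Q' : EuclideanSpace ℝ (Fin n) × ℝ → EuclideanSpace ℝ (Fin n) × ℝ → ℝ)
    (hQ' : ∀ p h, HasHadamardDerivAt Q p h (Q' p h))
    (γ : ℝ) (hγ : 0 < γ)
    (g : EuclideanSpace ℝ (Fin n) → ℝ → EuclideanSpace ℝ (Fin m))
    (ψ : EuclideanSpace ℝ (Fin n) → EuclideanSpace ℝ (Fin m) → ℝ → EuclideanSpace ℝ (Fin m))
    (hi : ∀ x t, 0 ≤ t → 0 < Q (x, t) →
      ∀ u : EuclideanSpace ℝ (Fin m), Q' (x, t) (F x u t, 1) ≤ ⟪g x t, u⟫)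
    (hii : ∀ x t, 0 ≤ t → 0 < Q (x, t) →
      ∀ u : EuclideanSpace ℝ (Fin m), ⟪g x t, ψ x u t⟫ ≤ 0)
    (x : ℝ → EuclideanSpace ℝ (Fin n)) (u : ℝ → EuclideanSpace ℝ (Fin m))
    (hxlip : LocallyLipschitz x)
    (hu : ∀ t, 0 ≤ t → u t = γ • ψ (x t) (u t) t)
    (hode : ∀ᵐ t ∂(volume.restrict (Set.Ici (0 : ℝ))), HasDerivAt x (F (x t) (u t) t) t)
    (T : ℝ) (hT : 0 ≤ T) (hQT : Q (x T, T) = 0) :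
    ∀ t, T ≤ t → Q (x t, t) = 0 := by
  have hV : LocallyLipschitz fun t => Q (x t, t) := hQlip.comp (hxlip.prodMk LocallyLipschitz.id)
  have hderiv : ∀ᵐ t, T < t → 0 < Q (x t, t) →
      ∃ d ≤ 0, HasDerivWithinAt (fun t => Q (x t, t)) d (Ioi t) t := by
    filter_upwards [(ae_restrict_iff' measurableSet_Ici).1 hode] with t hxt hTt hpos
    have ht : 0 ≤ t := hT.trans hTt.le
    refine ⟨_, ?_, (hQ' _ _).comp_hasDerivWithinAt_Ioi
      (((hxt ht).prodMk (hasDerivAt_id t)).hasDerivWithinAt)⟩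
    calc Q' (x t, t) (F (x t) (u t) t, 1) ≤ ⟪g (x t) t, u t⟫ := hi _ _ ht hpos _
      _ = γ * ⟪g (x t) t, ψ (x t) (u t) t⟫ := by
        conv_lhs => rw [hu t ht]
        exact real_inner_smul_right _ _ _
      _ ≤ 0 := mul_nonpos_of_nonneg_of_nonpos hγ.le (hii _ _ ht hpos _)
  intro t ht
  exact le_antisymm (hV.nonpos_of_ae_deriv_right_nonpos_of_pos hQT.le hderiv t ht)
    (hQnonneg _ _ (hT.trans ht))

/-- Lemma 1 of the paper: once the goal function vanishes along a trajectory of the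
closed-loop Speed-Gradient system, it vanishes forever afterwards. -/
theorem speed_gradient_goal_stays_zero
    (n m : ℕ) (hn : 1 ≤ n) (hm : 1 ≤ m)
    (F : EuclideanSpace ℝ (Fin n) → EuclideanSpace ℝ (Fin m) → ℝ → EuclideanSpace ℝ (Fin n))
    (hF : ContinuousOn
      (fun p : EuclideanSpace ℝ (Fin n) × EuclideanSpace ℝ (Fin m) × ℝ => F p.1 p.2.1 p.2.2)
      {p | 0 ≤ p.2.2})
    (Q : EuclideanSpace ℝ (Fin n) × ℝ → ℝ)
    (hQlip : LocallyLipschitz Q)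
    (hQnonneg : ∀ x t, 0 ≤ t → 0 ≤ Q (x, t))
    (Q' : EuclideanSpace ℝ (Fin n) × ℝ → EuclideanSpace ℝ (Fin n) × ℝ → ℝ)
    (hQ' : ∀ p h, HasHadamardDerivAt Q p h (Q' p h))
    (γ : ℝ) (hγ : 0 < γ)
    (g : EuclideanSpace ℝ (Fin n) → ℝ → EuclideanSpace ℝ (Fin m))
    (ψ : EuclideanSpace ℝ (Fin n) → EuclideanSpace ℝ (Fin m) → ℝ → EuclideanSpace ℝ (Fin m))
    (hi : ∀ x t, 0 ≤ t → 0 < Q (x, t) →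
      ∀ u : EuclideanSpace ℝ (Fin m), Q' (x, t) (F x u t, 1) ≤ ⟪g x t, u⟫)
    (hii : ∀ x t, 0 ≤ t → 0 < Q (x, t) →
      ∀ u : EuclideanSpace ℝ (Fin m), ⟪g x t, ψ x u t⟫ ≤ 0)
    (x : ℝ → EuclideanSpace ℝ (Fin n)) (u : ℝ → EuclideanSpace ℝ (Fin m))
    (hxlip : LocallyLipschitz x)
    (hu : ∀ t, 0 ≤ t → u t = γ • ψ (x t) (u t) t)
    (hode : ∀ᵐ t ∂(volume.restrict (Set.Ici (0 : ℝ))), HasDerivAt x (F (x t) (u t) t) t)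
    (T : ℝ) (hT : 0 ≤ T) (hQT : Q (x T, T) = 0) :
    ∀ t, T ≤ t → Q (x t, t) = 0 :=
  speed_gradient_goal_stays_zero_general n m F Q hQlip hQnonneg Q' hQ' γ hγ g ψ hi hii x u hxlip hu
    hode T hT hQT
end

section
/- Let Q(x) = (σ(x) − |x₃|)² + x₃² with σ(x) = √(x₁² + x₂²). For every x ∈ ℝ³ with x₃ = 0, the function Q is Hadamard directionally differentiable at x with Q'(x; h) = 2x₁h₁ + 2x₂h₂ − 2|h₃|σ(x) for all h ∈ ℝ³; moreover Q is Hadamard superdifferentiable at x with superdifferential the convex hull of the two points (2x₁, 2x₂, 2σ(x)) and (2x₁, 2x₂, −2σ(x)), i.e. Q'(x; h) = min{vᵀh : v ∈ co{(2x₁, 2x₂, 2σ(x)), (2x₁, 2x₂, −2σ(x))}} for all h ∈ ℝ³. -/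
open Filter Topology RealInnerProductSpace

/-- `σ x = √(x₁² + x₂²)`. -/
noncomputable def sigmaBI (x : EuclideanSpace ℝ (Fin 3)) : ℝ :=
  Real.sqrt (x 0 ^ 2 + x 1 ^ 2)

/-- The goal function `Q(x) = (σ(x) − |x₃|)² + x₃²` for the Brockett integrator. -/
noncomputable def QBI (x : EuclideanSpace ℝ (Fin 3)) : ℝ :=
  (sigmaBI x - |x 2|) ^ 2 + (x 2) ^ 2

/-! Since `σ(y)² = y₁² + y₂²`, we have `Q(y) = y₁² + y₂² + 2y₃² − 2|y₃|σ(y)`. For `x₃ = 0` and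
`α > 0` the nonsmooth term at `x + αh'` is `2α|h'₃|σ(x + αh')`, so the difference quotient of `Q`
is a continuous function of `(α, h')` on all of `ℝ × ℝ³`, and its value at `(0, h)` is the
Hadamard derivative. The functional `v ↦ ⟪v, h⟫` maps the segment between the two generators
onto the interval between `c ± 2σ(x)h₃`, with `c = 2x₁h₁ + 2x₂h₂`, whose minimum is
`c − 2σ(x)|h₃|`. -/

theorem hasHadamardDerivAt_of_continuousAt {E : Type*} [NormedAddCommGroup E]
    [NormedSpace ℝ E] {f : E → ℝ} {x h : E} {g : ℝ × E → ℝ} (hg : ContinuousAt g (0, h))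
    (hfg : ∀ α > 0, ∀ v, f (x + α • v) - f x = α * g (α, v)) :
    HasHadamardDerivAt f x h (g (0, h)) := by
  have hle : (𝓝[>] (0 : ℝ)) ×ˢ 𝓝 h ≤ 𝓝 ((0 : ℝ), h) := by
    rw [nhds_prod_eq]
    exact prod_mono nhdsWithin_le_nhds le_rfl
  refine (hg.tendsto.mono_left hle).congr' ?_
  filter_upwards [prod_mem_prod self_mem_nhdsWithin univ_mem] with p hp
  rw [hfg p.1 hp.1 p.2, mul_div_cancel_left₀ _ (ne_of_gt hp.1)]

theorem isLeast_inner_convexHull_pair {E : Type*} [NormedAddCommGroup E]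
    [InnerProductSpace ℝ E] (a b h : E) :
    IsLeast {r : ℝ | ∃ v ∈ convexHull ℝ {a, b}, r = ⟪v, h⟫} (min ⟪a, h⟫ ⟪b, h⟫) := by
  have himage : {r : ℝ | ∃ v ∈ convexHull ℝ {a, b}, r = ⟪v, h⟫}
      = (innerₛₗ ℝ).flip h '' convexHull ℝ {a, b} := by
    ext
    simp [eq_comm]
  rw [himage, LinearMap.image_convexHull, Set.image_pair, convexHull_pair, segment_eq_uIcc]
  exact isLeast_Icc inf_le_sup

theorem min_add_mul_sub_mul {c s : ℝ} (hs : 0 ≤ s) (t : ℝ) :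
    min (c + s * t) (c - s * t) = c - s * |t| := by
  rcases le_total 0 t with ht | ht
  · rw [abs_of_nonneg ht, min_eq_right (by nlinarith)]
  · rw [abs_of_nonpos ht, min_eq_left (by nlinarith)]
    ring

theorem inner_equiv_symm_vec3 (a b c : ℝ) (h : EuclideanSpace ℝ (Fin 3)) :
    ⟪(WithLp.equiv 2 (Fin 3 → ℝ)).symm ![a, b, c], h⟫ = a * h 0 + b * h 1 + c * h 2 := by
  simp only [WithLp.equiv_symm_apply, PiLp.inner_apply, RCLike.inner_apply, Real.ringHom_apply,
    Fin.sum_univ_three, Fin.isValue, Matrix.cons_val_zero, Matrix.cons_val_one, Matrix.cons_val]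
  ring

theorem sigmaBI_nonneg (x : EuclideanSpace ℝ (Fin 3)) : 0 ≤ sigmaBI x :=
  Real.sqrt_nonneg _

theorem sigmaBI_sq (x : EuclideanSpace ℝ (Fin 3)) : sigmaBI x ^ 2 = x 0 ^ 2 + x 1 ^ 2 :=
  Real.sq_sqrt (by positivity)

@[fun_prop]
theorem continuous_sigmaBI : Continuous sigmaBI := by
  unfold sigmaBI
  fun_prop

theorem QBI_eq (x : EuclideanSpace ℝ (Fin 3)) :
    QBI x = x 0 ^ 2 + x 1 ^ 2 + 2 * x 2 ^ 2 - 2 * |x 2| * sigmaBI x := by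
  rw [QBI, ← sigmaBI_sq, ← sq_abs (x 2)]
  ring

theorem QBI_add_smul_sub_of_x3_eq_zero {x : EuclideanSpace ℝ (Fin 3)} (hx3 : x 2 = 0)
    {α : ℝ} (hα : 0 ≤ α) (v : EuclideanSpace ℝ (Fin 3)) :
    QBI (x + α • v) - QBI x = α * (2 * x 0 * v 0 + 2 * x 1 * v 1
      + α * (v 0 ^ 2 + v 1 ^ 2 + 2 * v 2 ^ 2) - 2 * |v 2| * sigmaBI (x + α • v)) := by
  simp only [QBI_eq, PiLp.add_apply, PiLp.smul_apply, smul_eq_mul, hx3, zero_add, abs_mul,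
    abs_of_nonneg hα, abs_zero]
  ring

theorem hasHadamardDerivAt_QBI_of_x3_eq_zero {x : EuclideanSpace ℝ (Fin 3)} (hx3 : x 2 = 0)
    (h : EuclideanSpace ℝ (Fin 3)) :
    HasHadamardDerivAt QBI x h (2 * x 0 * h 0 + 2 * x 1 * h 1 - 2 * |h 2| * sigmaBI x) := by
  have hg : ContinuousAt (fun p : ℝ × EuclideanSpace ℝ (Fin 3) => 2 * x 0 * p.2 0
      + 2 * x 1 * p.2 1 + p.1 * (p.2 0 ^ 2 + p.2 1 ^ 2 + 2 * p.2 2 ^ 2)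
      - 2 * |p.2 2| * sigmaBI (x + p.1 • p.2)) (0, h) := by fun_prop
  simpa using hasHadamardDerivAt_of_continuousAt hg
    fun α hα v => QBI_add_smul_sub_of_x3_eq_zero hx3 hα.le v

/-- At every point with `x₃ = 0`, the goal function `Q` is Hadamard directionally
differentiable with `Q'(x; h) = 2x₁h₁ + 2x₂h₂ − 2|h₃|σ(x)`, and it is Hadamard
superdifferentiable with superdifferential
`co {(2x₁, 2x₂, 2σ(x)), (2x₁, 2x₂, −2σ(x))}`: its directional derivative in direction `h`
is the minimum of `⟪v, h⟫` over this convex hull. -/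
theorem QBI_superdifferentiable_on_x3_eq_zero (x : EuclideanSpace ℝ (Fin 3))
    (hx3 : x 2 = 0) :
    ∀ h : EuclideanSpace ℝ (Fin 3),
      HasHadamardDerivAt QBI x h
        (2 * x 0 * h 0 + 2 * x 1 * h 1 - 2 * |h 2| * sigmaBI x) ∧
      IsLeast {r : ℝ | ∃ v ∈ convexHull ℝ
          ({(WithLp.equiv 2 (Fin 3 → ℝ)).symm ![2 * x 0, 2 * x 1, 2 * sigmaBI x],
            (WithLp.equiv 2 (Fin 3 → ℝ)).symm ![2 * x 0, 2 * x 1, -2 * sigmaBI x]} :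
            Set (EuclideanSpace ℝ (Fin 3))), r = ⟪v, h⟫}
        (2 * x 0 * h 0 + 2 * x 1 * h 1 - 2 * |h 2| * sigmaBI x) := by
  intro h
  refine ⟨hasHadamardDerivAt_QBI_of_x3_eq_zero hx3 h, ?_⟩
  have hmin := min_add_mul_sub_mul (c := 2 * x 0 * h 0 + 2 * x 1 * h 1)
    (mul_nonneg zero_le_two (sigmaBI_nonneg x)) (h 2)
  convert isLeast_inner_convexHull_pair _ _ h using 1
  rw [inner_equiv_symm_vec3, inner_equiv_symm_vec3, neg_mul, neg_mul, ← sub_eq_add_neg, hmin]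
  ring
end

section
/- Let ω₀ > 0, K > 0, γ > 0. Every maximal solution (q, p) : [0, t₀) → ℝ² × ℝ² of the damped system q̇ = p, ṗ = −ω₀²(1 + K(q₁² + q₂²))q − γp is defined for all t ≥ 0 (t₀ = ∞), is bounded, and satisfies (q(t), p(t)) → (0, 0) as t → ∞; in particular H(q(t), p(t)) → 0 as t → ∞, where H(q, p) = ½(p₁² + p₂²) + (ω₀²/2)(q₁² + q₂²) + (ω₀²K/4)(q₁² + q₂²)². -/
/-!
Along a solution the energy `H` satisfies `dH/dt = -γ |p|²`, and `H` bounds `|q|` and `|p|`.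
Hence a solution on `[0, r)` with `r < ∞` stays in a compact set, where the vector field is
Lipschitz, and Picard–Lindelöf continues it past `r`: maximal solutions are global.
For decay, the perturbed energy `V = H + ε q·p` with small `ε > 0` satisfies `H/2 ≤ V ≤ 3H/2`
and `dV/dt ≤ -min(γ, ε) H`, so `V`, hence `H`, decays exponentially; `H → 0` forces
`(q, p) → 0`.
-/

open Filter Topology

/-- The Hamiltonian of the vibrating string:
`H(q, p) = ½(p₁² + p₂²) + (ω₀²/2)(q₁² + q₂²) + (ω₀²K/4)(q₁² + q₂²)²`. -/
noncomputable def Hstring (ω₀ K : ℝ) (q p : ℝ × ℝ) : ℝ :=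
  (1 / 2) * (p.1 ^ 2 + p.2 ^ 2) + (ω₀ ^ 2 / 2) * (q.1 ^ 2 + q.2 ^ 2)
    + (ω₀ ^ 2 * K / 4) * (q.1 ^ 2 + q.2 ^ 2) ^ 2

open Set Metric Bornology

section AutonomousODE

variable {E : Type*} [NormedAddCommGroup E] [NormedSpace ℝ E] {F : E → E}

theorem IsIntegralCurveOn.eqOn_Icc_of_contDiff (hF : ContDiff ℝ 1 F) {f g : ℝ → E} {a b : ℝ}
    (hf : IsIntegralCurveOn f (fun _ => F) (Icc a b))
    (hg : IsIntegralCurveOn g (fun _ => F) (Icc a b)) (hfg : f a = g a) :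
    EqOn f g (Icc a b) := by
  obtain ⟨L, hL⟩ := (hF.locallyLipschitz.locallyLipschitzOn
    (s := f '' Icc a b ∪ g '' Icc a b)).exists_lipschitzOnWith_of_compact
    ((isCompact_Icc.image_of_continuousOn hf.continuousOn).union
      (isCompact_Icc.image_of_continuousOn hg.continuousOn))
  have right_deriv {h : ℝ → E} (hh : IsIntegralCurveOn h (fun _ => F) (Icc a b)) :
      ∀ t ∈ Ico a b, HasDerivWithinAt h (F (h t)) (Ici t) t := fun t ht =>
    (hh t (Ico_subset_Icc_self ht)).mono_of_mem_nhdsWithin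
      (mem_of_superset (Icc_mem_nhdsGE ht.2) (Icc_subset_Icc_left ht.1))
  exact ODE_solution_unique_of_mem_Icc_right (fun _ _ => hL) hf.continuousOn (right_deriv hf)
    (fun t ht => .inl (mem_image_of_mem f (Ico_subset_Icc_self ht))) hg.continuousOn
    (right_deriv hg) (fun t ht => .inr (mem_image_of_mem g (Ico_subset_Icc_self ht))) hfg

theorem IsIntegralCurveOn.exists_extension_Ico [ProperSpace E] (hF : ContDiff ℝ 1 F)
    {x : ℝ → E} {a r : ℝ} (har : a < r) (hx : IsIntegralCurveOn x (fun _ => F) (Ico a r))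
    (hbdd : IsBounded (x '' Ico a r)) :
    ∃ b > r, ∃ y : ℝ → E, EqOn y x (Ico a r) ∧ IsIntegralCurveOn y (fun _ => F) (Ico a b) := by
  obtain ⟨x₀, -, hx₀⟩ := hbdd.isCompact_closure.exists_clusterPt (f := map x (𝓝[<] r))
    (tendsto_principal.2 (eventually_of_mem (Ico_mem_nhdsLT har)
      fun t ht => subset_closure (mem_image_of_mem x ht)))
  -- Picard–Lindelöf near a cluster point `x₀` of `x` at `r⁻` gives a uniform existence time `ε`;
  -- restart from `x r'` for some `r' > r - ε` with `x r'` close to `x₀`.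
  obtain ⟨ε, hε, _, ρ, _, _, hρ, hpl⟩ :=
    IsPicardLindelof.of_contDiffAt_one (hF.contDiffAt (x := x₀))
  obtain ⟨r', ⟨hr'a, hr'r⟩, hr'x₀⟩ : ∃ r' ∈ Ioo (max a (r - ε)) r, x r' ∈ closedBall x₀ ρ :=
    (Eventually.and_frequently (Ioo_mem_nhdsLT (max_lt har (sub_lt_self r hε)))
      (hx₀.frequently (closedBall_mem_nhds x₀ hρ))).exists
  rw [max_lt_iff] at hr'a
  obtain ⟨α, hαr', hα⟩ := (hpl r').exists_eq_forall_mem_Icc_hasDerivWithinAt hr'x₀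
  have hα_deriv : ∀ t ∈ Ioo (r' - ε) (r' + ε), HasDerivAt α (F (α t)) t := fun t ht =>
    (hα t (Ioo_subset_Icc_self ht)).hasDerivAt (Icc_mem_nhds ht.1 ht.2)
  have hxα : EqOn x α (Ico r' r) := fun t ht =>
    eqOn_Icc_of_contDiff hF (hx.mono (Icc_subset_Ico hr'a.1.le ht.2))
      (fun s hs => (hα_deriv s ⟨by linarith [hs.1], by linarith [hs.2, ht.2]⟩).hasDerivWithinAt)
      hαr'.symm ⟨ht.1, le_rfl⟩
  set y : ℝ → E := fun s => if s < r then x s else α s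
  have hy_left : ∀ t < r, y =ᶠ[𝓝 t] x := fun t ht =>
    eventually_of_mem (Iio_mem_nhds ht) fun s hs => if_pos hs
  have hy_right : ∀ t > r', y =ᶠ[𝓝 t] α := fun t ht => by
    filter_upwards [Ioi_mem_nhds ht] with s hs
    by_cases hsr : s < r
    · exact (if_pos hsr).trans (hxα ⟨hs.le, hsr⟩)
    · exact if_neg hsr
  refine ⟨r' + ε, by linarith, y, fun t ht => if_pos ht.2, fun t ht => ?_⟩
  rcases lt_or_ge t r with htr | htr
  · have hx_t : HasDerivWithinAt x (F (x t)) (Ico a (r' + ε)) t :=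
      (hx t ⟨ht.1, htr⟩).mono_of_mem_nhdsWithin <| mem_of_superset
        (inter_mem_nhdsWithin _ (Iio_mem_nhds htr)) fun s hs => ⟨hs.1.1, hs.2⟩
    rw [(hy_left t htr).eq_of_nhds]
    exact hx_t.congr_of_eventuallyEq ((hy_left t htr).filter_mono nhdsWithin_le_nhds)
      (hy_left t htr).eq_of_nhds
  · rw [(hy_right t (by linarith)).eq_of_nhds]
    exact ((hα_deriv t ⟨by linarith, ht.2⟩).congr_of_eventuallyEq
      (hy_right t (by linarith))).hasDerivWithinAt

end AutonomousODE

theorem le_mul_exp_of_hasDerivWithinAt_le {f f' : ℝ → ℝ} {a c : ℝ}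
    (hf : ∀ t ∈ Ici a, HasDerivWithinAt f (f' t) (Ici a) t)
    (hf' : ∀ t ∈ Ici a, f' t ≤ -c * f t) {t : ℝ} (ht : a ≤ t) :
    f t ≤ f a * Real.exp (-c * (t - a)) := by
  have := le_gronwallBound_of_liminf_deriv_right_le (K := -c) (ε := 0) (b := t)
    (fun s hs => (hf s hs.1).continuousWithinAt.mono (fun u hu => hu.1))
    (fun s hs r hr => ((hf s hs.1).mono (Ici_subset_Ici.2 hs.1)).liminf_right_slope_le hr)
    le_rfl (fun s hs => by rw [add_zero]; exact hf' s hs.1) t ⟨ht, le_rfl⟩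
  rwa [gronwallBound_ε0] at this

theorem hasDerivWithinAt_prodMk_iff {𝕜 E F : Type*} [NontriviallyNormedField 𝕜]
    [NormedAddCommGroup E] [NormedSpace 𝕜 E] [NormedAddCommGroup F] [NormedSpace 𝕜 F]
    {f : 𝕜 → E} {g : 𝕜 → F} {f' : E} {g' : F} {s : Set 𝕜} {x : 𝕜} :
    HasDerivWithinAt (fun t => (f t, g t)) (f', g') s x ↔
      HasDerivWithinAt f f' s x ∧ HasDerivWithinAt g g' s x :=
  ⟨fun h => ⟨(ContinuousLinearMap.fst 𝕜 E F).hasFDerivAt.comp_hasDerivWithinAt x h,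
    (ContinuousLinearMap.snd 𝕜 E F).hasFDerivAt.comp_hasDerivWithinAt x h⟩,
    fun h => h.1.prodMk h.2⟩

section DampedString

variable (ω₀ K γ : ℝ)

noncomputable def dampedStringField (x : (ℝ × ℝ) × (ℝ × ℝ)) : (ℝ × ℝ) × (ℝ × ℝ) :=
  (x.2, (-(ω₀ ^ 2) * (1 + K * (x.1.1 ^ 2 + x.1.2 ^ 2))) • x.1 - γ • x.2)

theorem contDiff_dampedStringField : ContDiff ℝ 1 (dampedStringField ω₀ K γ) := by
  unfold dampedStringField
  fun_prop

def IsDampedStringSolution (S : Set ℝ) (q p : ℝ → ℝ × ℝ) : Prop :=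
  ∀ t ∈ S, HasDerivWithinAt q (p t) S t ∧
    HasDerivWithinAt p ((-(ω₀ ^ 2) * (1 + K * ((q t).1 ^ 2 + (q t).2 ^ 2))) • q t - γ • p t) S t

variable {ω₀ K γ} {S : Set ℝ} {q p : ℝ → ℝ × ℝ}

theorem isDampedStringSolution_iff_isIntegralCurveOn :
    IsDampedStringSolution ω₀ K γ S q p ↔
      IsIntegralCurveOn (fun t => (q t, p t)) (fun _ => dampedStringField ω₀ K γ) S :=
  forall₂_congr fun _ _ => hasDerivWithinAt_prodMk_iff.symm

theorem hasDerivWithinAt_Hstring {t : ℝ} (hq : HasDerivWithinAt q (p t) S t)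
    (hp : HasDerivWithinAt p
      ((-(ω₀ ^ 2) * (1 + K * ((q t).1 ^ 2 + (q t).2 ^ 2))) • q t - γ • p t) S t) :
    HasDerivWithinAt (fun τ => Hstring ω₀ K (q τ) (p τ))
      (-γ * ((p t).1 ^ 2 + (p t).2 ^ 2)) S t := by
  obtain ⟨hq₁, hq₂⟩ := hasDerivWithinAt_prodMk_iff.1 hq
  obtain ⟨hp₁, hp₂⟩ := hasDerivWithinAt_prodMk_iff.1 hp
  have hs := (hq₁.pow 2).add (hq₂.pow 2)
  refine ((((hp₁.pow 2).add (hp₂.pow 2)).const_mul _).add (hs.const_mul _) |>.add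
    ((hs.pow 2).const_mul _)).congr_deriv ?_
  simp only [Prod.smul_fst, Prod.smul_snd, smul_eq_mul, Pi.add_apply, Pi.pow_apply]
  ring

theorem hasDerivWithinAt_dot {t : ℝ} (hq : HasDerivWithinAt q (p t) S t)
    (hp : HasDerivWithinAt p
      ((-(ω₀ ^ 2) * (1 + K * ((q t).1 ^ 2 + (q t).2 ^ 2))) • q t - γ • p t) S t) :
    HasDerivWithinAt (fun τ => (q τ).1 * (p τ).1 + (q τ).2 * (p τ).2)
      ((p t).1 ^ 2 + (p t).2 ^ 2
        - ω₀ ^ 2 * (1 + K * ((q t).1 ^ 2 + (q t).2 ^ 2)) * ((q t).1 ^ 2 + (q t).2 ^ 2)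
        - γ * ((q t).1 * (p t).1 + (q t).2 * (p t).2)) S t := by
  obtain ⟨hq₁, hq₂⟩ := hasDerivWithinAt_prodMk_iff.1 hq
  obtain ⟨hp₁, hp₂⟩ := hasDerivWithinAt_prodMk_iff.1 hp
  refine ((hq₁.mul hp₁).add (hq₂.mul hp₂)).congr_deriv ?_
  simp only [Prod.smul_fst, Prod.smul_snd, smul_eq_mul]
  ring

end DampedString

section Energy

variable {ω₀ K : ℝ}

theorem Prod.norm_sq_le_sq_add_sq (v : ℝ × ℝ) : ‖v‖ ^ 2 ≤ v.1 ^ 2 + v.2 ^ 2 := by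
  rw [Prod.norm_def]
  rcases max_choice ‖v.1‖ ‖v.2‖ with h | h <;>
    rw [h, Real.norm_eq_abs, sq_abs] <;> nlinarith [sq_nonneg v.1, sq_nonneg v.2]

theorem Hstring_nonneg (hK : 0 ≤ K) (q p : ℝ × ℝ) : 0 ≤ Hstring ω₀ K q p := by
  unfold Hstring
  positivity

theorem norm_fst_le_sqrt_Hstring (hω₀ : ω₀ ≠ 0) (hK : 0 ≤ K) (q p : ℝ × ℝ) :
    ‖q‖ ≤ √(2 * Hstring ω₀ K q p / ω₀ ^ 2) := by
  refine (le_abs_self _).trans (Real.abs_le_sqrt ?_)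
  rw [le_div_iff₀ (by positivity)]
  unfold Hstring
  nlinarith [Prod.norm_sq_le_sq_add_sq q, sq_nonneg p.1, sq_nonneg p.2, sq_nonneg ω₀,
    mul_nonneg (mul_nonneg (sq_nonneg ω₀) hK) (sq_nonneg (q.1 ^ 2 + q.2 ^ 2))]

theorem norm_snd_le_sqrt_Hstring (hK : 0 ≤ K) (q p : ℝ × ℝ) :
    ‖p‖ ≤ √(2 * Hstring ω₀ K q p) := by
  refine (le_abs_self _).trans (Real.abs_le_sqrt ?_)
  unfold Hstring
  nlinarith [Prod.norm_sq_le_sq_add_sq p,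
    mul_nonneg (sq_nonneg ω₀) (add_nonneg (sq_nonneg q.1) (sq_nonneg q.2)),
    mul_nonneg (mul_nonneg (sq_nonneg ω₀) hK) (sq_nonneg (q.1 ^ 2 + q.2 ^ 2))]

theorem abs_mul_dot_le_Hstring {ε : ℝ} (hK : 0 ≤ K) (hε : 0 ≤ ε) (hε₁ : 2 * ε ≤ 1)
    (hε₂ : 2 * ε ≤ ω₀ ^ 2) (q p : ℝ × ℝ) :
    |ε * (q.1 * p.1 + q.2 * p.2)| ≤ Hstring ω₀ K q p / 2 := by
  have hquartic : 0 ≤ ω₀ ^ 2 * K / 4 * (q.1 ^ 2 + q.2 ^ 2) ^ 2 := by positivity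
  have hp : 0 ≤ (1 - 2 * ε) * (p.1 ^ 2 + p.2 ^ 2) := by nlinarith [sq_nonneg p.1, sq_nonneg p.2]
  have hq : 0 ≤ (ω₀ ^ 2 - 2 * ε) * (q.1 ^ 2 + q.2 ^ 2) := by
    nlinarith [sq_nonneg q.1, sq_nonneg q.2]
  unfold Hstring
  rw [abs_le]
  constructor
  · nlinarith [mul_nonneg hε (sq_nonneg (q.1 + p.1)), mul_nonneg hε (sq_nonneg (q.2 + p.2))]
  · nlinarith [mul_nonneg hε (sq_nonneg (q.1 - p.1)), mul_nonneg hε (sq_nonneg (q.2 - p.2))]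

theorem dissipation_le {γ ε : ℝ} (hω₀ : ω₀ ≠ 0) (hK : 0 ≤ K) (hε : 0 ≤ ε)
    (hεγ : ε * (2 * ω₀ ^ 2 + γ ^ 2) ≤ γ * ω₀ ^ 2) (q p : ℝ × ℝ) :
    -γ * (p.1 ^ 2 + p.2 ^ 2) + ε * (p.1 ^ 2 + p.2 ^ 2
        - ω₀ ^ 2 * (1 + K * (q.1 ^ 2 + q.2 ^ 2)) * (q.1 ^ 2 + q.2 ^ 2)
        - γ * (q.1 * p.1 + q.2 * p.2))
      ≤ -min γ ε * Hstring ω₀ K q p := by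
  set n := p.1 ^ 2 + p.2 ^ 2
  set s := q.1 ^ 2 + q.2 ^ 2
  have hn : 0 ≤ n := by positivity
  have hs : 0 ≤ s := by positivity
  have hω : 0 < ω₀ ^ 2 := by positivity
  have young :
      -(2 * ω₀ ^ 2 * (ε * γ * (q.1 * p.1 + q.2 * p.2))) ≤ ε * ω₀ ^ 4 * s + ε * γ ^ 2 * n := by
    nlinarith [mul_nonneg hε (sq_nonneg (ω₀ ^ 2 * q.1 + γ * p.1)),
      mul_nonneg hε (sq_nonneg (ω₀ ^ 2 * q.2 + γ * p.2))]
  have hγ : 0 ≤ γ := by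
    nlinarith [mul_nonneg hε (add_nonneg (mul_nonneg zero_le_two hω.le) (sq_nonneg γ))]
  have hquartic : 0 ≤ ε * ω₀ ^ 2 * K * s ^ 2 := by positivity
  have h_dissip : -γ * n + ε * (n - ω₀ ^ 2 * (1 + K * s) * s - γ * (q.1 * p.1 + q.2 * p.2))
      ≤ -(γ / 2) * n - ε * ω₀ ^ 2 / 2 * s - ε * ω₀ ^ 2 * K * s ^ 2 := by
    refine le_of_mul_le_mul_left ?_ (by positivity : (0 : ℝ) < 2 * ω₀ ^ 2)
    nlinarith [mul_nonneg (sub_nonneg.2 hεγ) hn]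
  have hμ : 0 ≤ min γ ε := le_min hγ hε
  have h_min : -(γ / 2) * n - ε * ω₀ ^ 2 / 2 * s - ε * ω₀ ^ 2 * K / 4 * s ^ 2
      ≤ -min γ ε * Hstring ω₀ K q p := by
    unfold Hstring
    nlinarith [mul_le_mul_of_nonneg_right (min_le_left γ ε) hn,
      mul_le_mul_of_nonneg_right (min_le_right γ ε) (mul_nonneg hω.le hs),
      mul_le_mul_of_nonneg_right (min_le_right γ ε)
        (mul_nonneg (mul_nonneg hω.le hK) (sq_nonneg s))]
  linarith

theorem tendsto_nhds_zero_of_tendsto_Hstring {α : Type*} {l : Filter α} {q p : α → ℝ × ℝ}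
    (hω₀ : ω₀ ≠ 0) (hK : 0 ≤ K) (h : Tendsto (fun t => Hstring ω₀ K (q t) (p t)) l (𝓝 0)) :
    Tendsto (fun t => (q t, p t)) l (𝓝 (0, 0)) := by
  refine .prodMk_nhds
    (squeeze_zero_norm (fun t => norm_fst_le_sqrt_Hstring hω₀ hK (q t) (p t)) ?_)
    (squeeze_zero_norm (fun t => norm_snd_le_sqrt_Hstring (ω₀ := ω₀) hK (q t) (p t)) ?_)
  · simpa using ((h.const_mul 2).div_const (ω₀ ^ 2)).sqrt
  · simpa using (h.const_mul 2).sqrt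

end Energy

namespace IsDampedStringSolution

variable {ω₀ K γ : ℝ} {S : Set ℝ} {q p : ℝ → ℝ × ℝ}

theorem antitoneOn_Hstring (hγ : 0 ≤ γ) (hS : Convex ℝ S)
    (hsol : IsDampedStringSolution ω₀ K γ S q p) :
    AntitoneOn (fun t => Hstring ω₀ K (q t) (p t)) S := by
  have hH t (ht : t ∈ S) := hasDerivWithinAt_Hstring (hsol t ht).1 (hsol t ht).2
  refine antitoneOn_of_hasDerivWithinAt_nonpos hS (fun t ht => (hH t ht).continuousWithinAt)
    (fun t ht => (hH t (interior_subset ht)).mono interior_subset) fun t _ => ?_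
  nlinarith [sq_nonneg (p t).1, sq_nonneg (p t).2]

theorem exists_forall_norm_le (hω₀ : ω₀ ≠ 0) (hK : 0 ≤ K) (hγ : 0 ≤ γ) (hS : Convex ℝ S)
    (h0 : 0 ∈ S) (hsol : IsDampedStringSolution ω₀ K γ S q p) :
    ∃ M, ∀ t ∈ S, 0 ≤ t → ‖q t‖ ≤ M ∧ ‖p t‖ ≤ M := by
  set H₀ := Hstring ω₀ K (q 0) (p 0)
  refine ⟨max √(2 * H₀ / ω₀ ^ 2) √(2 * H₀), fun t ht ht0 => ?_⟩
  have hH : Hstring ω₀ K (q t) (p t) ≤ H₀ := hsol.antitoneOn_Hstring hγ hS h0 ht ht0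
  refine ⟨(norm_fst_le_sqrt_Hstring hω₀ hK (q t) (p t)).trans (le_max_of_le_left ?_),
    (norm_snd_le_sqrt_Hstring (ω₀ := ω₀) hK (q t) (p t)).trans (le_max_of_le_right ?_)⟩ <;>
    gcongr

theorem exists_extension (hω₀ : ω₀ ≠ 0) (hK : 0 ≤ K) (hγ : 0 ≤ γ) {r : ℝ} (hr : 0 < r)
    (hsol : IsDampedStringSolution ω₀ K γ (Ico 0 r) q p) :
    ∃ b > r, ∃ q' p' : ℝ → ℝ × ℝ, (∀ t ∈ Ico 0 r, q' t = q t ∧ p' t = p t) ∧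
      IsDampedStringSolution ω₀ K γ (Ico 0 b) q' p' := by
  obtain ⟨M, hM⟩ := hsol.exists_forall_norm_le hω₀ hK hγ (convex_Ico 0 r) ⟨le_rfl, hr⟩
  have hbdd : IsBounded ((fun t => (q t, p t)) '' Ico 0 r) := by
    refine isBounded_iff_forall_norm_le.2 ⟨M, ?_⟩
    rintro _ ⟨t, ht, rfl⟩
    exact max_le (hM t ht ht.1).1 (hM t ht ht.1).2
  obtain ⟨b, hb, y, hyx, hy⟩ :=
    (isDampedStringSolution_iff_isIntegralCurveOn.1 hsol).exists_extension_Ico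
      (contDiff_dampedStringField ω₀ K γ) hr hbdd
  exact ⟨b, hb, fun t => (y t).1, fun t => (y t).2, fun t ht => Prod.ext_iff.1 (hyx ht),
    isDampedStringSolution_iff_isIntegralCurveOn.2 hy⟩

theorem tendsto_Hstring_atTop (hω₀ : ω₀ ≠ 0) (hK : 0 ≤ K) (hγ : 0 < γ)
    (hsol : IsDampedStringSolution ω₀ K γ (Ici 0) q p) :
    Tendsto (fun t => Hstring ω₀ K (q t) (p t)) atTop (𝓝 0) := by
  obtain ⟨ε, hε, hε₁, hε₂, hεγ⟩ : ∃ ε > 0, 2 * ε ≤ 1 ∧ 2 * ε ≤ ω₀ ^ 2 ∧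
      ε * (2 * ω₀ ^ 2 + γ ^ 2) ≤ γ * ω₀ ^ 2 := by
    have hω : 0 < ω₀ ^ 2 := by positivity
    refine ⟨min (min (1 / 2) (ω₀ ^ 2 / 2)) (γ * ω₀ ^ 2 / (2 * ω₀ ^ 2 + γ ^ 2)), by positivity,
      ?_, ?_, ?_⟩
    · linarith [min_le_left (min (1 / 2 : ℝ) (ω₀ ^ 2 / 2)) (γ * ω₀ ^ 2 / (2 * ω₀ ^ 2 + γ ^ 2)),
        min_le_left (1 / 2 : ℝ) (ω₀ ^ 2 / 2)]
    · linarith [min_le_left (min (1 / 2 : ℝ) (ω₀ ^ 2 / 2)) (γ * ω₀ ^ 2 / (2 * ω₀ ^ 2 + γ ^ 2)),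
        min_le_right (1 / 2 : ℝ) (ω₀ ^ 2 / 2)]
    · exact (le_div_iff₀ (by positivity)).1 (min_le_right _ _)
  set μ := min γ ε
  have hμ : 0 < μ := lt_min hγ hε
  set H := fun t => Hstring ω₀ K (q t) (p t)
  set V := fun t => H t + ε * ((q t).1 * (p t).1 + (q t).2 * (p t).2)
  have hV t (ht : t ∈ Ici (0 : ℝ)) : HasDerivWithinAt V _ (Ici 0) t :=
    (hasDerivWithinAt_Hstring (hsol t ht).1 (hsol t ht).2).add
      ((hasDerivWithinAt_dot (hsol t ht).1 (hsol t ht).2).const_mul ε)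
  have hV_le_H t : V t ≤ 3 / 2 * H t ∧ H t ≤ 2 * V t := by
    have := abs_le.1 (abs_mul_dot_le_Hstring hK hε.le hε₁ hε₂ (q t) (p t))
    constructor <;> linarith [this.1, this.2]
  have hdecay (t : ℝ) (ht : 0 ≤ t) : V t ≤ V 0 * Real.exp (-(2 * μ / 3) * t) := by
    simpa only [sub_zero] using le_mul_exp_of_hasDerivWithinAt_le hV (fun t _ => by
      have := dissipation_le hω₀ hK hε.le hεγ (q t) (p t)
      nlinarith [mul_le_mul_of_nonneg_left (hV_le_H t).1 hμ.le]) ht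
  have hexp : Tendsto (fun t => 2 * (V 0 * Real.exp (-(2 * μ / 3) * t))) atTop (𝓝 0) := by
    simpa using ((Real.tendsto_exp_atBot.comp
      (tendsto_id.const_mul_atTop_of_neg (by linarith : -(2 * μ / 3) < 0))).const_mul
        (V 0)).const_mul 2
  refine squeeze_zero' (.of_forall fun t => Hstring_nonneg hK _ _) ?_ hexp
  filter_upwards [eventually_ge_atTop 0] with t ht
  exact (hV_le_H t).2.trans (by gcongr; exact hdecay t ht)

end IsDampedStringSolution

theorem setOf_nonneg_and_coe_lt_coe (r : ℝ) : {s : ℝ | 0 ≤ s ∧ (s : EReal) < r} = Ico 0 r := by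
  ext
  simp

/-- Every maximal solution of the damped vibrating string system
`q̇ = p, ṗ = −ω₀²(1 + K(q₁² + q₂²))q − γp` on `[0, t₀)` is global (`t₀ = ∞`), bounded, and
converges to the origin; in particular the energy converges to `0`. -/
theorem damped_string_global_convergence
    (ω₀ K γ : ℝ) (hω₀ : 0 < ω₀) (hK : 0 < K) (hγ : 0 < γ)
    (t₀ : EReal) (ht₀ : 0 < t₀) (q p : ℝ → ℝ × ℝ)
    (hode : ∀ t ∈ {s : ℝ | 0 ≤ s ∧ (s : EReal) < t₀},
      HasDerivWithinAt q (p t) {s : ℝ | 0 ≤ s ∧ (s : EReal) < t₀} t ∧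
      HasDerivWithinAt p
        ((-(ω₀ ^ 2) * (1 + K * ((q t).1 ^ 2 + (q t).2 ^ 2))) • q t - γ • p t)
        {s : ℝ | 0 ≤ s ∧ (s : EReal) < t₀} t)
    (hmax : ∀ t₁ : EReal, t₀ < t₁ → ¬ ∃ q' p' : ℝ → ℝ × ℝ,
      (∀ t : ℝ, 0 ≤ t → (t : EReal) < t₀ → q' t = q t ∧ p' t = p t) ∧
      ∀ t ∈ {s : ℝ | 0 ≤ s ∧ (s : EReal) < t₁},
        HasDerivWithinAt q' (p' t) {s : ℝ | 0 ≤ s ∧ (s : EReal) < t₁} t ∧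
        HasDerivWithinAt p'
          ((-(ω₀ ^ 2) * (1 + K * ((q' t).1 ^ 2 + (q' t).2 ^ 2))) • q' t - γ • p' t)
          {s : ℝ | 0 ≤ s ∧ (s : EReal) < t₁} t) :
    t₀ = ⊤ ∧ (∃ M : ℝ, ∀ t : ℝ, 0 ≤ t → ‖q t‖ ≤ M ∧ ‖p t‖ ≤ M) ∧
      Tendsto (fun t => (q t, p t)) atTop (𝓝 ((0 : ℝ × ℝ), (0 : ℝ × ℝ))) ∧
      Tendsto (fun t => Hstring ω₀ K (q t) (p t)) atTop (𝓝 0) := by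
  induction t₀ with
  | bot => exact absurd ht₀ not_lt_bot
  | coe r =>
    rw [setOf_nonneg_and_coe_lt_coe] at hode
    obtain ⟨b, hrb, q', p', hq'p', hsol'⟩ :=
      IsDampedStringSolution.exists_extension hω₀.ne' hK.le hγ.le (EReal.coe_pos.1 ht₀) hode
    refine absurd ⟨q', p', fun t h0 htr => hq'p' t ⟨h0, EReal.coe_lt_coe_iff.1 htr⟩, ?_⟩
      (hmax b (EReal.coe_lt_coe_iff.2 hrb))
    rwa [setOf_nonneg_and_coe_lt_coe]
  | top =>
    have hS : {s : ℝ | 0 ≤ s ∧ (s : EReal) < ⊤} = Ici 0 := by ext; simp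
    rw [hS] at hode
    have hsol : IsDampedStringSolution ω₀ K γ (Ici 0) q p := hode
    obtain ⟨M, hM⟩ := hsol.exists_forall_norm_le hω₀.ne' hK.le hγ.le (convex_Ici 0) self_mem_Ici
    have hH := hsol.tendsto_Hstring_atTop hω₀.ne' hK.le hγ
    exact ⟨rfl, ⟨M, fun t ht => hM t ht ht⟩,
      tendsto_nhds_zero_of_tendsto_Hstring hω₀.ne' hK.le hH, hH⟩
end

section
/- Let ω₀ > 0, K > 0, γ > 0, H* > 0, and let (q, p) : [0, t₀) → ℝ² × ℝ² be a maximal solution of the system q̇ = p, ṗ = −ω₀²(1 + K(q₁² + q₂²))q + γp with (q(0), p(0)) ≠ (0, 0) and H(q(0), p(0)) < H*, where H(q, p) = ½(p₁² + p₂²) + (ω₀²/2)(q₁² + q₂²) + (ω₀²K/4)(q₁² + q₂²)². Then the function t ↦ H(q(t), p(t)) is nondecreasing on [0, t₀), and there exists T ∈ (0, t₀) such that H(q(T), p(T)) = H*. -/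
/-!
The energy `H` increases along solutions at rate `γ (p₁² + p₂²)`. If it never reached `H*`, it
would stay below `H*`, so the trajectory would stay bounded. For small `ε > 0` the function
`G = H - ε ⟨q, p⟩` lies between `H / 2` and `3 H / 2` and satisfies `G' ≥ ε G`; hence `H` grows at
least like `e^{ε t}` and the solution can only live on a bounded interval `[0, τ)`. But a bounded
solution of a locally Lipschitz autonomous ODE on `[0, τ)` continues past `τ` (Picard–Lindelöf
with an existence time that is uniform on a ball, glued to the old solution by uniqueness),
contradicting maximality.
-/

open Filter Topology

open Set Metric Real
open scoped NNReal

section Calculus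

variable {F G : Type*} [NormedAddCommGroup F] [NormedSpace ℝ F] [NormedAddCommGroup G]
  [NormedSpace ℝ G] {s : Set ℝ} {t : ℝ}

theorem HasDerivWithinAt.fst {f : ℝ → F × G} {f' : F × G} (h : HasDerivWithinAt f f' s t) :
    HasDerivWithinAt (fun u ↦ (f u).1) f'.1 s t := by
  simpa using h.hasFDerivWithinAt.fst.hasDerivWithinAt

theorem HasDerivWithinAt.snd {f : ℝ → F × G} {f' : F × G} (h : HasDerivWithinAt f f' s t) :
    HasDerivWithinAt (fun u ↦ (f u).2) f'.2 s t := by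
  simpa using h.hasFDerivWithinAt.snd.hasDerivWithinAt

theorem Convex.monotoneOn_of_hasDerivWithinAt_nonneg {f f' : ℝ → ℝ} (hs : Convex ℝ s)
    (hf : ∀ t ∈ s, HasDerivWithinAt f (f' t) s t) (hf' : ∀ t ∈ s, 0 ≤ f' t) : MonotoneOn f s :=
  _root_.monotoneOn_of_hasDerivWithinAt_nonneg hs (HasDerivWithinAt.continuousOn hf)
    (fun t ht ↦ (hf t (interior_subset ht)).mono interior_subset)
    (fun t ht ↦ hf' t (interior_subset ht))

theorem Convex.mul_exp_le_of_mul_le_deriv {f f' : ℝ → ℝ} {c : ℝ} (hs : Convex ℝ s)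
    (hf : ∀ t ∈ s, HasDerivWithinAt f (f' t) s t) (hf' : ∀ t ∈ s, c * f t ≤ f' t)
    {a b : ℝ} (ha : a ∈ s) (hb : b ∈ s) (hab : a ≤ b) :
    f a * exp (c * (b - a)) ≤ f b := by
  have hmono : MonotoneOn (fun t ↦ f t * exp (-(c * t))) s := by
    refine hs.monotoneOn_of_hasDerivWithinAt_nonneg
      (fun t ht ↦ (hf t ht).mul ((hasDerivAt_id t).const_mul c).neg.exp.hasDerivWithinAt)
      (fun t ht ↦ ?_)
    simp only [Pi.neg_apply, id, mul_one]
    nlinarith [mul_nonneg (sub_nonneg.2 (hf' t ht)) (exp_pos (-(c * t))).le]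
  have := mul_le_mul_of_nonneg_right (hmono ha hb hab) (exp_pos (c * b)).le
  simp only [mul_assoc, ← exp_add] at this
  rwa [neg_add_cancel, exp_zero, mul_one, neg_mul_eq_mul_neg, ← mul_add, neg_add_eq_sub] at this

theorem ContinuousOn.lt_of_forall_ne {f : ℝ → ℝ} (hs : s.OrdConnected) (hf : ContinuousOn f s)
    {a c : ℝ} (ha : a ∈ s) (hfa : f a < c) (hne : ∀ t ∈ s, a < t → f t ≠ c)
    (ht : t ∈ s) (hat : a ≤ t) : f t < c := by
  by_contra! hct
  obtain ⟨T, hT, hfT⟩ := intermediate_value_Icc hat (hf.mono (hs.out ha ht)) ⟨hfa.le, hct⟩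
  refine hne T (hs.out ha ht hT) (hT.1.lt_of_ne ?_) hfT
  rintro rfl
  exact hfa.ne hfT

end Calculus

section EReal

theorem EReal.ordConnected_setOf_nonneg_coe_lt (t₀ : EReal) :
    {s : ℝ | 0 ≤ s ∧ (s : EReal) < t₀}.OrdConnected :=
  ordConnected_Ici.inter (ordConnected_Iio.preimage_mono EReal.coe_strictMono.monotone)

theorem EReal.setOf_nonneg_coe_lt_coe (τ : ℝ) :
    {s : ℝ | 0 ≤ s ∧ (s : EReal) < τ} = Ico 0 τ := by
  ext s
  simp [EReal.coe_lt_coe_iff]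

theorem EReal.exists_coe_eq_of_forall_le {t₀ : EReal} (ht₀ : 0 < t₀) {T : ℝ}
    (hT : ∀ s ∈ {s : ℝ | 0 ≤ s ∧ (s : EReal) < t₀}, s ≤ T) : ∃ τ : ℝ, t₀ = τ := by
  refine ⟨t₀.toReal, (EReal.coe_toReal (fun htop ↦ ?_) (ht₀.trans' EReal.bot_lt_zero).ne').symm⟩
  have := hT (max T 0 + 1) ⟨by positivity, htop ▸ EReal.coe_lt_top _⟩
  linarith [le_max_left T 0]

end EReal

section AutonomousODE

variable {E : Type*} [NormedAddCommGroup E] [NormedSpace ℝ E] {v : E → E}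

theorem LocallyLipschitz.eqOn_Icc_of_hasDerivWithinAt (hv : LocallyLipschitz v) {f g : ℝ → E}
    {a b : ℝ} (hf : ContinuousOn f (Icc a b))
    (hf' : ∀ t ∈ Ico a b, HasDerivWithinAt f (v (f t)) (Ici t) t)
    (hg : ContinuousOn g (Icc a b))
    (hg' : ∀ t ∈ Ico a b, HasDerivWithinAt g (v (g t)) (Ici t) t) (ha : f a = g a) :
    EqOn f g (Icc a b) := by
  obtain ⟨L, hL⟩ := hv.locallyLipschitzOn.exists_lipschitzOnWith_of_compact
    ((isCompact_Icc.image_of_continuousOn hf).union (isCompact_Icc.image_of_continuousOn hg))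
  exact ODE_solution_unique_of_mem_Icc_right (fun _ _ ↦ hL) hf hf'
    (fun t ht ↦ .inl (mem_image_of_mem f (Ico_subset_Icc_self ht))) hg hg'
    (fun t ht ↦ .inr (mem_image_of_mem g (Ico_subset_Icc_self ht))) ha

variable [ProperSpace E]

theorem LocallyLipschitz.exists_uniform_time_hasDerivWithinAt (hv : LocallyLipschitz v)
    (R : ℝ) : ∃ δ > 0, ∀ x₀ ∈ closedBall (0 : E) R, ∀ t₀ : ℝ, ∃ f : ℝ → E, f t₀ = x₀ ∧
      ∀ t ∈ Icc t₀ (t₀ + δ), HasDerivWithinAt f (v (f t)) (Icc t₀ (t₀ + δ)) t := by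
  obtain ⟨L, hL⟩ := hv.locallyLipschitzOn.exists_lipschitzOnWith_of_compact
    (isCompact_closedBall (0 : E) (R + 1))
  obtain ⟨C, hC⟩ := (isCompact_closedBall (0 : E) (R + 1)).exists_bound_of_continuousOn
    hv.continuous.continuousOn
  set C' : ℝ≥0 := C.toNNReal + 1
  have hC' : (0 : ℝ) < C' := by positivity
  refine ⟨1 / C', by positivity, fun x₀ hx₀ t₀ ↦ ?_⟩
  have hball : closedBall x₀ 1 ⊆ closedBall 0 (R + 1) := by
    apply closedBall_subset_closedBall'
    rw [mem_closedBall] at hx₀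
    linarith
  have hpl : IsPicardLindelof (fun _ ↦ v) (tmin := t₀) (tmax := t₀ + 1 / C')
      ⟨t₀, le_rfl, by simp only [le_add_iff_nonneg_right]; positivity⟩ x₀ 1 0 C' L := by
    refine IsPicardLindelof.of_time_independent (fun y hy ↦ ?_) (hL.mono hball) (by simp [hC'.ne'])
    calc ‖v y‖ ≤ C := hC y (hball hy)
      _ ≤ C' := by
        simp only [C', NNReal.coe_add, Real.coe_toNNReal', NNReal.coe_one]
        linarith [le_max_left C 0]
  exact hpl.exists_eq_forall_mem_Icc_hasDerivWithinAt₀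

theorem LocallyLipschitz.exists_extension_of_norm_le (hv : LocallyLipschitz v) {x : ℝ → E}
    {a b R : ℝ} (hab : a < b) (hx : ∀ t ∈ Ico a b, HasDerivWithinAt x (v (x t)) (Ico a b) t)
    (hR : ∀ t ∈ Ico a b, ‖x t‖ ≤ R) :
    ∃ c > b, ∃ y : ℝ → E, EqOn y x (Ico a b) ∧
      ∀ t ∈ Ico a c, HasDerivWithinAt y (v (y t)) (Ico a c) t := by
  obtain ⟨δ, hδ, hsol⟩ := hv.exists_uniform_time_hasDerivWithinAt R
  set t₁ := max a (b - δ / 2)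
  have ht₁ : t₁ ∈ Ico a b := ⟨le_max_left _ _, max_lt hab (by linarith)⟩
  have hbc : b < t₁ + δ := by linarith [le_max_right a (b - δ / 2)]
  obtain ⟨f, hft₁, hf⟩ := hsol (x t₁) (mem_closedBall_zero_iff.2 (hR t₁ ht₁)) t₁
  have hxf : ∀ u ∈ Ico t₁ b, x u = f u := by
    intro u hu
    have hsub : Icc t₁ u ⊆ Ico a b := Icc_subset_Ico ht₁.1 hu.2
    have hsub' : Icc t₁ u ⊆ Icc t₁ (t₁ + δ) := Icc_subset_Icc_right (by linarith [hu.2])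
    refine hv.eqOn_Icc_of_hasDerivWithinAt ((HasDerivWithinAt.continuousOn hx).mono hsub)
      (fun t ht ↦ ?_) ((HasDerivWithinAt.continuousOn hf).mono hsub') (fun t ht ↦ ?_)
      hft₁.symm ⟨hu.1, le_rfl⟩
    · exact (hx t (hsub (Ico_subset_Icc_self ht))).mono_of_mem_nhdsWithin
        (Ico_mem_nhdsGE_of_mem ⟨(hsub (Ico_subset_Icc_self ht)).1, ht.2.trans hu.2⟩)
    · exact (hf t (hsub' (Ico_subset_Icc_self ht))).mono_of_mem_nhdsWithin
        (Icc_mem_nhdsGE_of_mem ⟨ht.1, ht.2.trans_le (hsub' ⟨hu.1, le_rfl⟩).2⟩)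
  set y : ℝ → E := fun t ↦ if t < b then x t else f t
  have hyf : EqOn y f (Ioo t₁ (t₁ + δ)) := by
    intro s hs
    by_cases hsb : s < b
    · simp only [y, if_pos hsb]
      exact hxf s ⟨hs.1.le, hsb⟩
    · simp only [y, if_neg hsb]
  refine ⟨t₁ + δ, hbc, y, fun t ht ↦ if_pos ht.2, fun t ht ↦ ?_⟩
  rcases lt_or_ge t b with htb | htb
  · rw [← hasDerivWithinAt_inter (Iio_mem_nhds htb), Ico_inter_Iio, min_eq_right hbc.le]
    refine (hx t ⟨ht.1, htb⟩).congr (fun s hs ↦ if_pos hs.2) ?_ |>.congr_deriv ?_ <;>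
      simp [y, htb]
  · have ht₁t : t₁ < t := ht₁.2.trans_le htb
    rw [← hasDerivWithinAt_inter (Ioi_mem_nhds ht₁t)]
    exact ((hf t ⟨ht₁t.le, ht.2.le⟩).mono Ioo_subset_Icc_self).congr hyf (hyf ⟨ht₁t, ht.2⟩)
      |>.congr_deriv (by rw [hyf ⟨ht₁t, ht.2⟩]) |>.mono fun s hs ↦ ⟨hs.2, hs.1.2⟩

end AutonomousODE

section String

variable {ω₀ K γ ε : ℝ}

def stringField (ω₀ K γ : ℝ) (x : (ℝ × ℝ) × (ℝ × ℝ)) : (ℝ × ℝ) × (ℝ × ℝ) :=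
  (x.2, (-(ω₀ ^ 2) * (1 + K * (x.1.1 ^ 2 + x.1.2 ^ 2))) • x.1 + γ • x.2)

theorem contDiff_stringField : ContDiff ℝ 1 (stringField ω₀ K γ) := by
  unfold stringField
  fun_prop

def IsStringSolution (ω₀ K γ : ℝ) (q p : ℝ → ℝ × ℝ) (s : Set ℝ) : Prop :=
  ∀ t ∈ s, HasDerivWithinAt q (p t) s t ∧
    HasDerivWithinAt p ((-(ω₀ ^ 2) * (1 + K * ((q t).1 ^ 2 + (q t).2 ^ 2))) • q t + γ • p t) s t

theorem isStringSolution_iff {q p : ℝ → ℝ × ℝ} {s : Set ℝ} :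
    IsStringSolution ω₀ K γ q p s ↔
      ∀ t ∈ s, HasDerivWithinAt (fun u ↦ (q u, p u)) (stringField ω₀ K γ (q t, p t)) s t :=
  ⟨fun h t ht ↦ (h t ht).1.prodMk (h t ht).2, fun h t ht ↦ ⟨(h t ht).fst, (h t ht).snd⟩⟩

noncomputable def stringLyapunov (ω₀ K ε : ℝ) (q p : ℝ × ℝ) : ℝ :=
  Hstring ω₀ K q p - ε * (q.1 * p.1 + q.2 * p.2)

theorem Hstring_pos (hω₀ : ω₀ ≠ 0) (hK : 0 ≤ K) {q p : ℝ × ℝ} (h : (q, p) ≠ (0, 0)) :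
    0 < Hstring ω₀ K q p := by
  have hw : 0 < ω₀ ^ 2 := by positivity
  have hquartic : 0 ≤ ω₀ ^ 2 * K / 4 * (q.1 ^ 2 + q.2 ^ 2) ^ 2 := by positivity
  unfold Hstring
  rcases (add_nonneg (sq_nonneg q.1) (sq_nonneg q.2)).lt_or_eq with hq | hq
  · nlinarith [mul_pos hw hq, sq_nonneg p.1, sq_nonneg p.2]
  · have hp : 0 < p.1 ^ 2 + p.2 ^ 2 := by
      by_contra! hp
      apply h
      simp only [Prod.ext_iff, Prod.fst_zero, Prod.snd_zero]
      refine ⟨⟨?_, ?_⟩, ?_, ?_⟩ <;>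
        nlinarith [sq_nonneg q.1, sq_nonneg q.2, sq_nonneg p.1, sq_nonneg p.2]
    rw [← hq]
    nlinarith

theorem norm_le_sqrt_Hstring (hω₀ : ω₀ ≠ 0) (hK : 0 ≤ K) (q p : ℝ × ℝ) :
    ‖(q, p)‖ ≤ √(2 * (1 + (ω₀ ^ 2)⁻¹) * Hstring ω₀ K q p) := by
  have hw : 0 < ω₀ ^ 2 := by positivity
  have hquartic : 0 ≤ ω₀ ^ 2 * K / 4 * (q.1 ^ 2 + q.2 ^ 2) ^ 2 := by positivity
  have hq : q.1 ^ 2 + q.2 ^ 2 ≤ (ω₀ ^ 2)⁻¹ * (2 * Hstring ω₀ K q p) := by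
    rw [← div_eq_inv_mul, le_div_iff₀' hw]
    unfold Hstring
    nlinarith [sq_nonneg p.1, sq_nonneg p.2]
  have hp : p.1 ^ 2 + p.2 ^ 2 ≤ 2 * Hstring ω₀ K q p := by
    unfold Hstring
    nlinarith [sq_nonneg q.1, sq_nonneg q.2]
  simp only [Prod.norm_def, Real.norm_eq_abs, max_le_iff]
  refine ⟨⟨?_, ?_⟩, ?_, ?_⟩ <;> apply Real.abs_le_sqrt <;>
    nlinarith [sq_nonneg q.1, sq_nonneg q.2, sq_nonneg p.1, sq_nonneg p.2]

theorem abs_mul_inner_le_Hstring_div_two (hε : 0 ≤ ε) (hε₁ : ε ≤ 1 / 2)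
    (hεω : ε ≤ ω₀ ^ 2 / 2) (hK : 0 ≤ K) (q p : ℝ × ℝ) :
    |ε * (q.1 * p.1 + q.2 * p.2)| ≤ Hstring ω₀ K q p / 2 := by
  have hinner : |q.1 * p.1 + q.2 * p.2| ≤ (q.1 ^ 2 + q.2 ^ 2 + (p.1 ^ 2 + p.2 ^ 2)) / 2 := by
    rw [abs_le]
    constructor <;> nlinarith [sq_nonneg (q.1 + p.1), sq_nonneg (q.2 + p.2),
      sq_nonneg (q.1 - p.1), sq_nonneg (q.2 - p.2)]
  rw [abs_mul, abs_of_nonneg hε]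
  unfold Hstring
  nlinarith [mul_le_mul_of_nonneg_left hinner hε,
    mul_nonneg (sub_nonneg.2 hεω) (add_nonneg (sq_nonneg q.1) (sq_nonneg q.2)),
    mul_nonneg (sub_nonneg.2 hε₁) (add_nonneg (sq_nonneg p.1) (sq_nonneg p.2)),
    mul_nonneg (mul_nonneg (sq_nonneg ω₀) hK) (sq_nonneg (q.1 ^ 2 + q.2 ^ 2))]

theorem mul_stringLyapunov_le (hω₀ : ω₀ ≠ 0) (hK : 0 ≤ K) (hγ : 0 < γ) (hε : 0 < ε)
    (hεγ : ε * (3 * ω₀ ^ 2 + γ ^ 2) ≤ 2 * γ * ω₀ ^ 2) (q p : ℝ × ℝ) :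
    ε * stringLyapunov ω₀ K ε q p ≤ γ * (p.1 ^ 2 + p.2 ^ 2) - ε * ((p.1 ^ 2 + p.2 ^ 2)
      - ω₀ ^ 2 * (1 + K * (q.1 ^ 2 + q.2 ^ 2)) * (q.1 ^ 2 + q.2 ^ 2)
      + γ * (q.1 * p.1 + q.2 * p.2)) := by
  have hw : 0 < ω₀ ^ 2 := by positivity
  have hamgm : 2 * γ * ω₀ ^ 2 * |q.1 * p.1 + q.2 * p.2| ≤
      ω₀ ^ 4 * (q.1 ^ 2 + q.2 ^ 2) + γ ^ 2 * (p.1 ^ 2 + p.2 ^ 2) := by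
    rcases abs_cases (q.1 * p.1 + q.2 * p.2) with ⟨h, -⟩ | ⟨h, -⟩ <;> rw [h] <;>
      nlinarith [sq_nonneg (ω₀ ^ 2 * q.1 - γ * p.1), sq_nonneg (ω₀ ^ 2 * q.2 - γ * p.2),
        sq_nonneg (ω₀ ^ 2 * q.1 + γ * p.1), sq_nonneg (ω₀ ^ 2 * q.2 + γ * p.2)]
  have hεγ' : ε ≤ γ := by nlinarith
  have hs := le_abs_self (q.1 * p.1 + q.2 * p.2)
  have habs := abs_nonneg (q.1 * p.1 + q.2 * p.2)
  -- the difference of the two sides, times `2 ω₀²`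
  have hD : 0 ≤ 2 * ω₀ ^ 2 * ((γ - 3 / 2 * ε) * (p.1 ^ 2 + p.2 ^ 2)
      + ε * ω₀ ^ 2 / 2 * (q.1 ^ 2 + q.2 ^ 2) + 3 / 4 * ε * ω₀ ^ 2 * K * (q.1 ^ 2 + q.2 ^ 2) ^ 2
      - ε * (γ - ε) * (q.1 * p.1 + q.2 * p.2)) := by
    nlinarith [mul_le_mul_of_nonneg_left hamgm hε.le,
      mul_nonneg (sub_nonneg.2 hεγ) (add_nonneg (sq_nonneg p.1) (sq_nonneg p.2)),
      mul_nonneg (mul_nonneg (mul_nonneg hε.le hε.le) hw.le) habs,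
      mul_nonneg (mul_nonneg (mul_nonneg hε.le (sub_nonneg.2 hεγ')) hw.le) (sub_nonneg.2 hs),
      mul_nonneg (mul_nonneg (mul_nonneg (mul_nonneg hw.le hw.le) hε.le) hK)
        (sq_nonneg (q.1 ^ 2 + q.2 ^ 2))]
  have := (mul_nonneg_iff_of_pos_left (by positivity : (0 : ℝ) < 2 * ω₀ ^ 2)).1 hD
  unfold stringLyapunov Hstring
  linarith

namespace IsStringSolution

variable {q p : ℝ → ℝ × ℝ} {s : Set ℝ} {t : ℝ}

theorem hasDerivWithinAt_Hstring (h : IsStringSolution ω₀ K γ q p s) (ht : t ∈ s) :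
    HasDerivWithinAt (fun u ↦ Hstring ω₀ K (q u) (p u)) (γ * ((p t).1 ^ 2 + (p t).2 ^ 2)) s t := by
  obtain ⟨hq, hp⟩ := h t ht
  have hq₁ := hq.fst
  have hq₂ := hq.snd
  have hp₁ := hp.fst
  have hp₂ := hp.snd
  exact (((hp₁.pow 2).add (hp₂.pow 2)).const_mul (1 / 2) |>.add
    (((hq₁.pow 2).add (hq₂.pow 2)).const_mul (ω₀ ^ 2 / 2)) |>.add
    ((((hq₁.pow 2).add (hq₂.pow 2)).pow 2).const_mul (ω₀ ^ 2 * K / 4))).congr_deriv (by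
      simp only [Prod.fst_add, Prod.snd_add, Prod.smul_fst, Prod.smul_snd, smul_eq_mul,
        Pi.add_apply, Pi.pow_apply]
      ring)

theorem hasDerivWithinAt_stringLyapunov (h : IsStringSolution ω₀ K γ q p s) (ht : t ∈ s) :
    HasDerivWithinAt (fun u ↦ stringLyapunov ω₀ K ε (q u) (p u))
      (γ * ((p t).1 ^ 2 + (p t).2 ^ 2) - ε * (((p t).1 ^ 2 + (p t).2 ^ 2)
        - ω₀ ^ 2 * (1 + K * ((q t).1 ^ 2 + (q t).2 ^ 2)) * ((q t).1 ^ 2 + (q t).2 ^ 2)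
        + γ * ((q t).1 * (p t).1 + (q t).2 * (p t).2))) s t := by
  obtain ⟨hq, hp⟩ := h t ht
  exact ((h.hasDerivWithinAt_Hstring ht).sub
    (((hq.fst.mul hp.fst).add (hq.snd.mul hp.snd)).const_mul ε)).congr_deriv (by
      simp only [Prod.fst_add, Prod.snd_add, Prod.smul_fst, Prod.smul_snd, smul_eq_mul]
      ring)

theorem exists_Hstring_mul_exp_le (h : IsStringSolution ω₀ K γ q p s) (hs : Convex ℝ s)
    (hω₀ : ω₀ ≠ 0) (hK : 0 ≤ K) (hγ : 0 < γ) :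
    ∃ ε > 0, ∀ a ∈ s, ∀ b ∈ s, a ≤ b →
      Hstring ω₀ K (q a) (p a) * exp (ε * (b - a)) ≤ 3 * Hstring ω₀ K (q b) (p b) := by
  -- the first two bounds make `stringLyapunov` comparable with `Hstring`, the third gives `G' ≥ εG`
  set ε := min (min (1 / 2) (ω₀ ^ 2 / 2)) (2 * γ * ω₀ ^ 2 / (3 * ω₀ ^ 2 + γ ^ 2))
  have hε : 0 < ε := by positivity
  have hε₁ : ε ≤ 1 / 2 := (min_le_left _ _).trans (min_le_left _ _)
  have hεω : ε ≤ ω₀ ^ 2 / 2 := (min_le_left _ _).trans (min_le_right _ _)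
  have hεγ : ε * (3 * ω₀ ^ 2 + γ ^ 2) ≤ 2 * γ * ω₀ ^ 2 :=
    (le_div_iff₀ (by positivity)).1 (min_le_right _ _)
  refine ⟨ε, hε, fun a ha b hb hab ↦ ?_⟩
  have hG := hs.mul_exp_le_of_mul_le_deriv (fun t ht ↦ h.hasDerivWithinAt_stringLyapunov ht)
    (fun t _ ↦ mul_stringLyapunov_le hω₀ hK hγ hε hεγ _ _) ha hb hab
  have hcmp (t : ℝ) := abs_le.1 (abs_mul_inner_le_Hstring_div_two hε.le hε₁ hεω hK (q t) (p t))
  unfold stringLyapunov at hG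
  nlinarith [(hcmp a).2, (hcmp b).1, exp_pos (ε * (b - a))]

theorem exists_forall_le_of_Hstring_lt (h : IsStringSolution ω₀ K γ q p s) (hs : Convex ℝ s)
    (hω₀ : ω₀ ≠ 0) (hK : 0 ≤ K) (hγ : 0 < γ) {a M : ℝ} (ha : a ∈ s)
    (hpos : 0 < Hstring ω₀ K (q a) (p a)) (hM : ∀ t ∈ s, Hstring ω₀ K (q t) (p t) < M) :
    ∃ T, ∀ t ∈ s, a ≤ t → t ≤ T := by
  obtain ⟨ε, hε, hgrowth⟩ := h.exists_Hstring_mul_exp_le hs hω₀ hK hγ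
  refine ⟨a + log (3 * M / Hstring ω₀ K (q a) (p a)) / ε, fun t ht hat ↦ ?_⟩
  rw [← sub_le_iff_le_add', le_div_iff₀ hε, mul_comm,
    le_log_iff_exp_le (div_pos (by linarith [hM a ha]) hpos), le_div_iff₀ hpos]
  linarith [hgrowth a ha t ht hat, hM t ht]

end IsStringSolution

end String

theorem antidamped_string_reaches_energy_level_general
    (ω₀ K γ Hstar : ℝ) (hω₀ : 0 < ω₀) (hK : 0 < K) (hγ : 0 < γ)
    (t₀ : EReal) (ht₀ : 0 < t₀) (q p : ℝ → ℝ × ℝ)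
    (h0 : (q 0, p 0) ≠ ((0 : ℝ × ℝ), (0 : ℝ × ℝ)))
    (hH0 : Hstring ω₀ K (q 0) (p 0) < Hstar)
    (hode : ∀ t ∈ {s : ℝ | 0 ≤ s ∧ (s : EReal) < t₀},
      HasDerivWithinAt q (p t) {s : ℝ | 0 ≤ s ∧ (s : EReal) < t₀} t ∧
      HasDerivWithinAt p
        ((-(ω₀ ^ 2) * (1 + K * ((q t).1 ^ 2 + (q t).2 ^ 2))) • q t + γ • p t)
        {s : ℝ | 0 ≤ s ∧ (s : EReal) < t₀} t)
    (hmax : ∀ t₁ : EReal, t₀ < t₁ → ¬ ∃ q' p' : ℝ → ℝ × ℝ,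
      (∀ t : ℝ, 0 ≤ t → (t : EReal) < t₀ → q' t = q t ∧ p' t = p t) ∧
      ∀ t ∈ {s : ℝ | 0 ≤ s ∧ (s : EReal) < t₁},
        HasDerivWithinAt q' (p' t) {s : ℝ | 0 ≤ s ∧ (s : EReal) < t₁} t ∧
        HasDerivWithinAt p'
          ((-(ω₀ ^ 2) * (1 + K * ((q' t).1 ^ 2 + (q' t).2 ^ 2))) • q' t + γ • p' t)
          {s : ℝ | 0 ≤ s ∧ (s : EReal) < t₁} t) :
    MonotoneOn (fun t => Hstring ω₀ K (q t) (p t)) {s : ℝ | 0 ≤ s ∧ (s : EReal) < t₀} ∧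
      ∃ T : ℝ, 0 < T ∧ (T : EReal) < t₀ ∧ Hstring ω₀ K (q T) (p T) = Hstar := by
  set S := {s : ℝ | 0 ≤ s ∧ (s : EReal) < t₀}
  have hsol : IsStringSolution ω₀ K γ q p S := hode
  have hS : S.OrdConnected := EReal.ordConnected_setOf_nonneg_coe_lt t₀
  have h0S : (0 : ℝ) ∈ S := ⟨le_rfl, mod_cast ht₀⟩
  have hH (t : ℝ) (ht : t ∈ S) := hsol.hasDerivWithinAt_Hstring ht
  refine ⟨hS.convex.monotoneOn_of_hasDerivWithinAt_nonneg hH fun t _ ↦ by positivity, ?_⟩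
  by_contra! hne
  have hlt (t : ℝ) (ht : t ∈ S) : Hstring ω₀ K (q t) (p t) < Hstar :=
    (HasDerivWithinAt.continuousOn hH).lt_of_forall_ne hS h0S hH0
      (fun T hT hT0 ↦ hne T hT0 hT.2) ht ht.1
  obtain ⟨T, hT⟩ := hsol.exists_forall_le_of_Hstring_lt hS.convex hω₀.ne' hK.le hγ h0S
    (Hstring_pos hω₀.ne' hK.le h0) hlt
  obtain ⟨τ, rfl⟩ := EReal.exists_coe_eq_of_forall_le ht₀ fun t ht ↦ hT t ht ht.1
  simp only [S, EReal.setOf_nonneg_coe_lt_coe] at hsol hlt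
  have hbound (t : ℝ) (ht : t ∈ Ico 0 τ) : ‖(q t, p t)‖ ≤ √(2 * (1 + (ω₀ ^ 2)⁻¹) * Hstar) :=
    (norm_le_sqrt_Hstring hω₀.ne' hK.le _ _).trans (sqrt_le_sqrt (by gcongr; exact (hlt t ht).le))
  obtain ⟨c, hc, y, hyx, hy⟩ := contDiff_stringField.locallyLipschitz.exists_extension_of_norm_le
    (mod_cast ht₀) (isStringSolution_iff.1 hsol) hbound
  refine hmax c (mod_cast hc) ⟨fun u ↦ (y u).1, fun u ↦ (y u).2,
    fun t ht₀ htτ ↦ Prod.ext_iff.1 (hyx ⟨ht₀, mod_cast htτ⟩), ?_⟩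
  rw [EReal.setOf_nonneg_coe_lt_coe]
  exact isStringSolution_iff.2 hy

/-- For a maximal solution of the anti-damped vibrating string system
`q̇ = p, ṗ = −ω₀²(1 + K(q₁² + q₂²))q + γp` with nonzero initial state of energy below
`H* > 0`, the energy is nondecreasing and reaches the level `H*` at some time
`T ∈ (0, t₀)`. -/
theorem antidamped_string_reaches_energy_level
    (ω₀ K γ Hstar : ℝ) (hω₀ : 0 < ω₀) (hK : 0 < K) (hγ : 0 < γ) (hHstar : 0 < Hstar)
    (t₀ : EReal) (ht₀ : 0 < t₀) (q p : ℝ → ℝ × ℝ)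
    (h0 : (q 0, p 0) ≠ ((0 : ℝ × ℝ), (0 : ℝ × ℝ)))
    (hH0 : Hstring ω₀ K (q 0) (p 0) < Hstar)
    (hode : ∀ t ∈ {s : ℝ | 0 ≤ s ∧ (s : EReal) < t₀},
      HasDerivWithinAt q (p t) {s : ℝ | 0 ≤ s ∧ (s : EReal) < t₀} t ∧
      HasDerivWithinAt p
        ((-(ω₀ ^ 2) * (1 + K * ((q t).1 ^ 2 + (q t).2 ^ 2))) • q t + γ • p t)
        {s : ℝ | 0 ≤ s ∧ (s : EReal) < t₀} t)
    (hmax : ∀ t₁ : EReal, t₀ < t₁ → ¬ ∃ q' p' : ℝ → ℝ × ℝ,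
      (∀ t : ℝ, 0 ≤ t → (t : EReal) < t₀ → q' t = q t ∧ p' t = p t) ∧
      ∀ t ∈ {s : ℝ | 0 ≤ s ∧ (s : EReal) < t₁},
        HasDerivWithinAt q' (p' t) {s : ℝ | 0 ≤ s ∧ (s : EReal) < t₁} t ∧
        HasDerivWithinAt p'
          ((-(ω₀ ^ 2) * (1 + K * ((q' t).1 ^ 2 + (q' t).2 ^ 2))) • q' t + γ • p' t)
          {s : ℝ | 0 ≤ s ∧ (s : EReal) < t₁} t) :
    MonotoneOn (fun t => Hstring ω₀ K (q t) (p t)) {s : ℝ | 0 ≤ s ∧ (s : EReal) < t₀} ∧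
      ∃ T : ℝ, 0 < T ∧ (T : EReal) < t₀ ∧ Hstring ω₀ K (q T) (p T) = Hstar :=
  antidamped_string_reaches_energy_level_general ω₀ K γ Hstar hω₀ hK hγ t₀ ht₀ q p h0 hH0 hode hmax
end
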